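/- arXiv:2011.00234 — 3 statements merged into one kernel-verified Lean document; each statement's English description precedes it below -/
import Mathlib

section
/- Assume the (A3) setting. Define k(y) = (y_d ∧ 1)^{β₁} (y_d ∨ 1)^{β₂} |y|^{−d−α−β₁−β₂} (1 + |log y_d|)^{β₃} (log(1 + |y|/(y_d ∨ 1)))^{β₄} for y ∈ ℝ^d_+, and let z⁰ = (0̃, 1/4). Then there exists a constant c > 0, depending only on d, α, β₁, β₂, β₃, β₄ and C₂, such that J(z, y) ≥ c k(y) for all z ∈ B(z⁰, 1/8) and all y ∈ ℝ^d_+ ∖ D(1,1). -/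
open MeasureTheory Real

noncomputable section

/-- Points of `ℝ^d`, written as pairs `(x̃, x_d) ∈ ℝ^{d-1} × ℝ` (here `m = d - 1`). -/
abbrev Pt (m : ℕ) := EuclideanSpace ℝ (Fin m) × ℝ

/-- The Euclidean norm on `Pt m`. -/
noncomputable def nrm {m : ℕ} (x : Pt m) : ℝ := Real.sqrt (‖x.1‖ ^ 2 + x.2 ^ 2)

/-- The box `D_0̃(a,b) = {y = (ỹ, y_d) : |ỹ| < a, 0 < y_d < b}`. -/
def Dbox {m : ℕ} (a b : ℝ) : Set (Pt m) :=
  {y | ‖y.1‖ < a ∧ 0 < y.2 ∧ y.2 < b}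

/-- The function `B̃(x,y)` of assumption (A3). -/
noncomputable def Btilde {m : ℕ} (β₁ β₂ β₃ β₄ : ℝ) (x y : Pt m) : ℝ :=
  (min (min x.2 y.2 / nrm (x - y)) 1) ^ β₁ * (min (max x.2 y.2 / nrm (x - y)) 1) ^ β₂ *
    (Real.log (1 + min (max x.2 y.2) (nrm (x - y)) / min (min x.2 y.2) (nrm (x - y)))) ^ β₃ *
    (Real.log (1 + nrm (x - y) / min (max x.2 y.2) (nrm (x - y)))) ^ β₄

/-- The function `k(y)` of Lemma 7.1. -/
noncomputable def kfun {m : ℕ} (d : ℕ) (α β₁ β₂ β₃ β₄ : ℝ) (y : Pt m) : ℝ :=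
  (min y.2 1) ^ β₁ * (max y.2 1) ^ β₂ * nrm y ^ (-(d : ℝ) - α - β₁ - β₂) *
    (1 + |Real.log y.2|) ^ β₃ * (Real.log (1 + nrm y / max y.2 1)) ^ β₄

/-! For `z` near `z⁰ = (0̃, 1/4)` and `y` outside `D(1,1)` we have `|y| ≥ 1`, `z_d ≍ 1` and
`5|y|/8 ≤ |z - y| ≤ 2|y|`. Each factor of `B̃(z, y)` is then bounded below by a constant times the
matching factor of `k(y)`: the two ratio factors by `(y_d ∧ 1)/|y|` and `(y_d ∨ 1)/|y|`; the first
logarithm by `1 + |log y_d|`, since it is at least `log (4/3)` and at least `|log y_d| - log 8`; and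
the second by `log (1 + |y|/(y_d ∨ 1))`, since it is at least `log 2` and at least that quantity
minus `log 2`. Multiplying the bounds and using `B ≥ C₂⁻¹ B̃` gives the claim. -/

namespace Pt

variable {m : ℕ}

lemma nrm_eq_norm_toLp (x : Pt m) : nrm x = ‖WithLp.toLp 2 x‖ := by
  simp [nrm, WithLp.prod_norm_eq_of_L2]

lemma abs_snd_le_nrm (x : Pt m) : |x.2| ≤ nrm x := by
  rw [nrm, Real.le_sqrt (abs_nonneg _) (by positivity), sq_abs]
  exact le_add_of_nonneg_left (sq_nonneg _)

lemma norm_fst_le_nrm (x : Pt m) : ‖x.1‖ ≤ nrm x := by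
  rw [nrm, Real.le_sqrt (norm_nonneg _) (by positivity)]
  exact le_add_of_nonneg_right (sq_nonneg _)

lemma nrm_sub_le (x y : Pt m) : nrm (x - y) ≤ nrm x + nrm y := by
  simpa only [nrm_eq_norm_toLp, WithLp.toLp_sub] using norm_sub_le _ _

lemma nrm_sub_nrm_le (x y : Pt m) : nrm y - nrm x ≤ nrm (x - y) := by
  simpa only [nrm_eq_norm_toLp, WithLp.toLp_sub, norm_sub_rev (WithLp.toLp 2 x)] using
    norm_sub_norm_le (WithLp.toLp 2 y) (WithLp.toLp 2 x)

lemma nrm_sub_comm (x y : Pt m) : nrm (x - y) = nrm (y - x) := by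
  simp only [nrm_eq_norm_toLp, WithLp.toLp_sub, norm_sub_rev]

lemma nrm_zero_one_fourth : nrm ((0 : EuclideanSpace ℝ (Fin m)), (1 / 4 : ℝ)) = 1 / 4 := by
  simp [nrm, Real.sqrt_sq]

lemma snd_mem_Ioo_of_nrm_sub_lt {z : Pt m}
    (hz : nrm (z - ((0 : EuclideanSpace ℝ (Fin m)), (1 / 4 : ℝ))) < 1 / 8) :
    1 / 8 < z.2 ∧ z.2 < 3 / 8 := by
  have h := (abs_snd_le_nrm _).trans_lt hz
  rw [Prod.snd_sub, abs_lt] at h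
  constructor <;> linarith [h.1, h.2]

lemma nrm_lt_of_nrm_sub_lt {z : Pt m}
    (hz : nrm (z - ((0 : EuclideanSpace ℝ (Fin m)), (1 / 4 : ℝ))) < 1 / 8) : nrm z < 3 / 8 := by
  have h := nrm_sub_nrm_le ((0 : EuclideanSpace ℝ (Fin m)), (1 / 4 : ℝ)) z
  rw [nrm_zero_one_fourth, nrm_sub_comm] at h
  linarith

lemma one_le_nrm_of_notMem_Dbox {y : Pt m} (hy : 0 < y.2) (hyD : y ∉ Dbox 1 1) : 1 ≤ nrm y := by
  rcases lt_or_ge ‖y.1‖ 1 with h | h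
  · have hy1 : 1 ≤ y.2 := not_lt.1 fun hy1 => hyD ⟨h, hy, hy1⟩
    exact hy1.trans ((le_abs_self _).trans (abs_snd_le_nrm y))
  · exact h.trans (norm_fst_le_nrm y)

end Pt

lemma le_one_add_div_mul {a b L X : ℝ} (ha : 0 < a) (hb : 0 ≤ b) (haL : a ≤ L) (hX : X ≤ b + L) :
    X ≤ (1 + b / a) * L := by
  have : b ≤ b / a * L := by
    rw [div_mul_eq_mul_div, le_div_iff₀ ha]
    exact mul_le_mul_of_nonneg_left haL hb
  linarith

lemma rpow_neg_mul_rpow_le {x K L β : ℝ} (hx : 0 ≤ x) (hK : 0 < K) (h : x ≤ K * L) (hβ : 0 ≤ β) :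
    K ^ (-β) * x ^ β ≤ L ^ β := by
  have hL : 0 ≤ L := nonneg_of_mul_nonneg_right (hx.trans h) hK
  calc K ^ (-β) * x ^ β ≤ K ^ (-β) * (K ^ β * L ^ β) := by
        rw [← Real.mul_rpow hK.le hL]
        gcongr
    _ = L ^ β := by rw [← mul_assoc, ← Real.rpow_add hK, neg_add_cancel, Real.rpow_zero, one_mul]

lemma abs_log_le_log {b t : ℝ} (hb : 0 < b) (hbt : b ≤ t) (hbt' : 1 ≤ b * t) :
    |Real.log b| ≤ Real.log t := by
  rw [abs_le, neg_le, ← Real.log_inv]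
  refine ⟨Real.log_le_log (inv_pos.2 hb) ?_, Real.log_le_log hb hbt⟩
  rwa [inv_eq_one_div, div_le_iff₀ hb, mul_comm]

lemma div_le_sixteen_mul_min_div_one {p q r R : ℝ} (hp : 0 ≤ p) (hpR : p ≤ R) (hpq : p / 8 ≤ q)
    (hr : 0 < r) (hrR : r ≤ 2 * R) : p / R ≤ 16 * min (q / r) 1 := by
  have hR : 0 < R := by linarith
  have hq : 0 ≤ q := (div_nonneg hp (by norm_num)).trans hpq
  rw [mul_min_of_nonneg _ _ (by norm_num : (0 : ℝ) ≤ 16)]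
  refine le_min ?_ ?_
  · calc p / R = 16 * ((p / 8) / (2 * R)) := by field_simp; ring
      _ ≤ 16 * (q / r) := by gcongr
  · rw [div_le_iff₀ hR]; linarith

section FactorBounds

variable {a b r R : ℝ}

lemma min_div_le_sixteen_mul (ha : 1 / 8 ≤ a) (hb : 0 ≤ b) (hR : 1 ≤ R) (hr : 0 < r)
    (hrR : r ≤ 2 * R) : min b 1 / R ≤ 16 * min (min a b / r) 1 := by
  refine div_le_sixteen_mul_min_div_one (le_min hb zero_le_one) ((min_le_right _ _).trans hR)
    ?_ hr hrR
  exact le_min (by linarith [min_le_right b 1]) (by linarith [min_le_left b 1])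

lemma max_div_le_sixteen_mul (ha : 1 / 8 ≤ a) (hb : 0 ≤ b) (hbR : b ≤ R) (hR : 1 ≤ R)
    (hr : 0 < r) (hrR : r ≤ 2 * R) : max b 1 / R ≤ 16 * min (max a b / r) 1 := by
  refine div_le_sixteen_mul_min_div_one (hb.trans (le_max_left _ _)) (max_le hbR hR) ?_ hr hrR
  rw [div_le_iff₀ (by norm_num : (0 : ℝ) < 8)]
  exact max_le (by linarith [le_max_right a b]) (by linarith [le_max_left a b])

def absLogConst : ℝ := 1 + (1 + Real.log 8) / Real.log (4 / 3)

lemma absLogConst_pos : 0 < absLogConst := by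
  have : 0 < Real.log (4 / 3) := Real.log_pos (by norm_num)
  have : 0 ≤ Real.log 8 := Real.log_nonneg (by norm_num)
  unfold absLogConst
  positivity

lemma one_add_abs_log_le (ha : 1 / 8 ≤ a) (ha' : a ≤ 3 / 8) (hb : 0 < b) (hr : 1 / 8 ≤ r)
    (hbr : b ≤ 2 * r) :
    1 + |Real.log b| ≤ absLogConst * Real.log (1 + min (max a b) r / min (min a b) r) := by
  set q := min (max a b) r / min (min a b) r
  have hden : 0 < min (min a b) r := lt_min (lt_min (by linarith) hb) (by linarith)
  have hden_le_b : min (min a b) r ≤ b := (min_le_left _ _).trans (min_le_right _ _)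
  have hden_le : min (min a b) r ≤ 3 / 8 := (min_le_left _ _).trans ((min_le_left _ _).trans ha')
  have hnum : 1 / 8 ≤ min (max a b) r := le_min (ha.trans (le_max_left _ _)) hr
  have hnum_b : b / 2 ≤ min (max a b) r := le_min (by linarith [le_max_right a b]) (by linarith)
  have hnum_nonneg : 0 ≤ min (max a b) r := by linarith
  have hq : 1 / 3 ≤ q := by
    have := div_le_div₀ hnum_nonneg hnum hden hden_le; norm_num at this ⊢; linarith
  have hqb : 1 ≤ 8 * b * q := by
    have := div_le_div₀ hnum_nonneg hnum hden hden_le_b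
    rw [div_div, div_le_iff₀ (by positivity)] at this; linarith
  have hbq : b ≤ 8 * q := by
    have := div_le_div₀ hnum_nonneg hnum_b hden hden_le; linarith
  have hlogq : Real.log (4 / 3) ≤ Real.log (1 + q) := Real.log_le_log (by norm_num) (by linarith)
  have habs : |Real.log b| ≤ Real.log 8 + Real.log (1 + q) := by
    rw [← Real.log_mul (by norm_num) (by linarith)]
    exact abs_log_le_log hb (by linarith) (by nlinarith)
  exact le_one_add_div_mul (Real.log_pos (by norm_num)) (by positivity) hlogq (by linarith)

lemma log_one_add_div_max_le (ha : a ≤ 1) (hb : 0 < b) (hr : 0 < r) (hR : 0 ≤ R)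
    (hRr : R ≤ 2 * r) :
    Real.log (1 + R / max b 1) ≤ 2 * Real.log (1 + r / min (max a b) r) := by
  set n := min (max a b) r
  have hn : 0 < n := lt_min (hb.trans_le (le_max_right _ _)) hr
  have hn_max : n ≤ max b 1 :=
    (min_le_left _ _).trans (max_le (ha.trans (le_max_right _ _)) (le_max_left _ _))
  have hn_r : 1 ≤ r / n := (one_le_div hn).2 (min_le_right _ _)
  have hT : R / max b 1 ≤ 2 * (r / n) := by
    calc R / max b 1 ≤ R / n := div_le_div_of_nonneg_left hR hn hn_max
      _ ≤ 2 * r / n := by gcongr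
      _ = 2 * (r / n) := mul_div_assoc _ _ _
  have hlog2 : Real.log 2 ≤ Real.log (1 + r / n) := Real.log_le_log (by norm_num) (by linarith)
  have : Real.log (1 + R / max b 1) ≤ Real.log 2 + Real.log (1 + r / n) := by
    rw [← Real.log_mul (by norm_num) (by linarith)]
    exact Real.log_le_log (by positivity) (by linarith)
  linarith

end FactorBounds

lemma kfun_eq_of_nrm_pos {m d : ℕ} {α β₁ β₂ β₃ β₄ : ℝ} {y : Pt m} (hy : 0 ≤ y.2) (hR : 0 < nrm y) :
    kfun d α β₁ β₂ β₃ β₄ y = nrm y ^ (-(d : ℝ) - α) * (min y.2 1 / nrm y) ^ β₁ *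
      (max y.2 1 / nrm y) ^ β₂ * (1 + |Real.log y.2|) ^ β₃ *
      Real.log (1 + nrm y / max y.2 1) ^ β₄ := by
  have hmax : 0 ≤ max y.2 1 := hy.trans (le_max_left _ _)
  rw [kfun, Real.div_rpow (le_min hy zero_le_one) hR.le, Real.div_rpow hmax hR.le,
    sub_eq_add_neg _ β₂, sub_eq_add_neg _ β₁, Real.rpow_add hR, Real.rpow_add hR,
    Real.rpow_neg hR.le, Real.rpow_neg hR.le]
  field_simp

def kfunConst (d : ℕ) (α β₁ β₂ β₃ β₄ : ℝ) : ℝ :=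
  2 ^ (-(d : ℝ) - α) * 16 ^ (-β₁) * 16 ^ (-β₂) * absLogConst ^ (-β₃) * 2 ^ (-β₄)

lemma kfunConst_pos (d : ℕ) (α β₁ β₂ β₃ β₄ : ℝ) : 0 < kfunConst d α β₁ β₂ β₃ β₄ := by
  have := absLogConst_pos
  unfold kfunConst
  positivity

lemma kfunConst_mul_kfun_le {m d : ℕ} {α β₁ β₂ β₃ β₄ : ℝ} (hα : 0 ≤ α) (hβ₁ : 0 ≤ β₁)
    (hβ₂ : 0 ≤ β₂) (hβ₃ : 0 ≤ β₃) (hβ₄ : 0 ≤ β₄) {z y : Pt m} (hz : 1 / 8 < z.2)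
    (hz' : z.2 < 3 / 8) (hy : 0 < y.2) (hR : 1 ≤ nrm y) (hrR : 5 / 8 * nrm y ≤ nrm (z - y))
    (hrR' : nrm (z - y) ≤ 2 * nrm y) :
    kfunConst d α β₁ β₂ β₃ β₄ * kfun d α β₁ β₂ β₃ β₄ y ≤
      nrm (z - y) ^ (-(d : ℝ) - α) * Btilde β₁ β₂ β₃ β₄ z y := by
  have hR0 : 0 < nrm y := by linarith
  rw [kfun_eq_of_nrm_pos hy.le hR0, Btilde]
  set R := nrm y
  set r := nrm (z - y)
  have hr : 0 < r := by linarith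
  have hbR : y.2 ≤ R := (le_abs_self _).trans (Pt.abs_snd_le_nrm y)
  have h₀ : 2 ^ (-(d : ℝ) - α) * R ^ (-(d : ℝ) - α) ≤ r ^ (-(d : ℝ) - α) := by
    rw [← Real.mul_rpow zero_le_two hR0.le]
    exact Real.rpow_le_rpow_of_nonpos hr hrR' (by linarith [(d.cast_nonneg : (0 : ℝ) ≤ d)])
  have hK := absLogConst_pos
  have hlog₃ : 0 ≤ Real.log (1 + min (max z.2 y.2) r / min (min z.2 y.2) r) :=
    Real.log_nonneg (le_add_of_nonneg_right (by positivity))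
  have hlog₄ : 0 ≤ Real.log (1 + R / max y.2 1) :=
    Real.log_nonneg (le_add_of_nonneg_right (by positivity))
  have h₁ := rpow_neg_mul_rpow_le (by positivity) (by norm_num)
    (min_div_le_sixteen_mul (a := z.2) hz.le hy.le hR hr hrR') hβ₁
  have h₂ := rpow_neg_mul_rpow_le (by positivity) (by norm_num)
    (max_div_le_sixteen_mul (a := z.2) hz.le hy.le hbR hR hr hrR') hβ₂
  have h₃ := rpow_neg_mul_rpow_le (by positivity) hK
    (one_add_abs_log_le (r := r) hz.le hz'.le hy (by linarith) (by linarith)) hβ₃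
  have h₄ := rpow_neg_mul_rpow_le hlog₄ two_pos
    (log_one_add_div_max_le (a := z.2) (by linarith) hy hr hR0.le (by linarith)) hβ₄
  calc _ = (2 ^ (-(d : ℝ) - α) * R ^ (-(d : ℝ) - α)) * (16 ^ (-β₁) * (min y.2 1 / R) ^ β₁) *
        (16 ^ (-β₂) * (max y.2 1 / R) ^ β₂) *
        (absLogConst ^ (-β₃) * (1 + |Real.log y.2|) ^ β₃) *
        (2 ^ (-β₄) * Real.log (1 + R / max y.2 1) ^ β₄) := by
        unfold kfunConst; ring
    _ ≤ _ := by
        rw [← mul_assoc (r ^ _), ← mul_assoc (r ^ _), ← mul_assoc (r ^ _)]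
        gcongr ?_ * ?_ * ?_ * ?_ * ?_

theorem stmt_8_general (d : ℕ) (α β₁ β₂ β₃ β₄ C₂ : ℝ)
    (hα0 : 0 < α)
    (hβ₁ : 0 ≤ β₁) (hβ₂ : 0 ≤ β₂) (hβ₃ : 0 ≤ β₃) (hβ₄ : 0 ≤ β₄)
    (hC₂ : 1 ≤ C₂)
    (B : Pt (d - 1) → Pt (d - 1) → ℝ)
    (hBl : ∀ x y : Pt (d - 1), 0 < x.2 → 0 < y.2 →
      C₂⁻¹ * Btilde β₁ β₂ β₃ β₄ x y ≤ B x y) :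
    ∃ c : ℝ, 0 < c ∧
      ∀ z y : Pt (d - 1),
        nrm (z - ((0 : EuclideanSpace ℝ (Fin (d - 1))), (1 / 4 : ℝ))) < 1 / 8 →
        0 < y.2 → y ∉ (Dbox 1 1 : Set (Pt (d - 1))) →
        c * kfun d α β₁ β₂ β₃ β₄ y ≤ nrm (z - y) ^ (-(d : ℝ) - α) * B z y := by
  have hC₂0 : 0 < C₂ := one_pos.trans_le hC₂
  refine ⟨C₂⁻¹ * kfunConst d α β₁ β₂ β₃ β₄, mul_pos (inv_pos.2 hC₂0) (kfunConst_pos ..), ?_⟩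
  intro z y hz hy hyD
  obtain ⟨hz₁, hz₂⟩ := Pt.snd_mem_Ioo_of_nrm_sub_lt hz
  have hnz := Pt.nrm_lt_of_nrm_sub_lt hz
  have hR := Pt.one_le_nrm_of_notMem_Dbox hy hyD
  have hr₁ : 5 / 8 * nrm y ≤ nrm (z - y) := by linarith [Pt.nrm_sub_nrm_le z y]
  have hr₂ : nrm (z - y) ≤ 2 * nrm y := by linarith [Pt.nrm_sub_le z y]
  have hk := kfunConst_mul_kfun_le (d := d) hα0.le hβ₁ hβ₂ hβ₃ hβ₄ hz₁ hz₂ hy hR hr₁ hr₂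
  calc C₂⁻¹ * kfunConst d α β₁ β₂ β₃ β₄ * kfun d α β₁ β₂ β₃ β₄ y
      ≤ C₂⁻¹ * (nrm (z - y) ^ (-(d : ℝ) - α) * Btilde β₁ β₂ β₃ β₄ z y) := by
        rw [mul_assoc]; gcongr
    _ = nrm (z - y) ^ (-(d : ℝ) - α) * (C₂⁻¹ * Btilde β₁ β₂ β₃ β₄ z y) := by ring
    _ ≤ nrm (z - y) ^ (-(d : ℝ) - α) * B z y :=
        mul_le_mul_of_nonneg_left (hBl z y (by linarith) hy) (Real.rpow_nonneg (by linarith) _)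

theorem stmt_8 (d : ℕ) (hd : 2 ≤ d) (α β₁ β₂ β₃ β₄ C₂ : ℝ)
    (hα0 : 0 < α) (hα2 : α < 2)
    (hβ₁ : 0 ≤ β₁) (hβ₂ : 0 ≤ β₂) (hβ₃ : 0 ≤ β₃) (hβ₄ : 0 ≤ β₄)
    (h13 : 0 < β₃ → 0 < β₁) (h24 : 0 < β₄ → 0 < β₂) (hC₂ : 1 ≤ C₂)
    (B : Pt (d - 1) → Pt (d - 1) → ℝ)
    (hB0 : ∀ x y, 0 ≤ B x y)
    (hBl : ∀ x y : Pt (d - 1), 0 < x.2 → 0 < y.2 →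
      C₂⁻¹ * Btilde β₁ β₂ β₃ β₄ x y ≤ B x y)
    (hBu : ∀ x y : Pt (d - 1), 0 < x.2 → 0 < y.2 →
      B x y ≤ C₂ * Btilde β₁ β₂ β₃ β₄ x y) :
    ∃ c : ℝ, 0 < c ∧
      ∀ z y : Pt (d - 1),
        nrm (z - ((0 : EuclideanSpace ℝ (Fin (d - 1))), (1 / 4 : ℝ))) < 1 / 8 →
        0 < y.2 → y ∉ (Dbox 1 1 : Set (Pt (d - 1))) →
        c * kfun d α β₁ β₂ β₃ β₄ y ≤ nrm (z - y) ^ (-(d : ℝ) - α) * B z y :=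
  stmt_8_general d α β₁ β₂ β₃ β₄ C₂ hα0 hβ₁ hβ₂ hβ₃ hβ₄ hC₂ B hBl

end
end

section
/- Assume the (A3) setting and let p satisfy (α−1)₊ < p < α + (β₁ ∧ β₂). Set M = 1 + (((β₂+α−p)/(β₁+α−p)) ∨ 1) and ε = β₁ + α − p − (β₂+α−p)/M. Then there exists a constant c > 0, depending only on d, α, p, β₁, β₂, β₃, β₄ and C₂, such that J(z, y) ≤ c z_d^{β₁−ε} k(y) for all z ∈ D(1/2, 1/2) and all y ∈ ℝ^d_+ ∖ D(1,1), where k(y) = (y_d ∧ 1)^{β₁} (y_d ∨ 1)^{β₂} |y|^{−d−α−β₁−β₂} (1 + |log y_d|)^{β₃} (log(1 + |y|/(y_d ∨ 1)))^{β₄}. -/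
open MeasureTheory Real

noncomputable section

/-! Write `a = z_d`, `b = y_d`, `r = |z - y|`, `w = |y|`. For `z ∈ D(1/2,1/2)` and `y ∉ D(1,1)`
one has `r ≥ 1/2`, `1 ≤ w`, `b ≤ w` and `w/3 ≤ r ≤ 2w`, so `r^{-d-α-β₁-β₂} ≲ w^{-d-α-β₁-β₂}`.
The power part of `B̃(z,y)` is at most `a^{β₁-T} (b∧1)^{β₁} (b∨1)^{β₂} r^{-β₁-β₂}` with
`T = max(0, β₁-β₂)`, and each logarithmic factor costs at most a factor `1 + |log a|` beyond the
corresponding factor of `k(y)`. Since `(1 + |log a|)^{β₃+β₄} ≲ a^{-(ε-T)}` as soon as `ε > T`, all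
that is needed of `ε` is `ε > 0` and `ε > β₁ - β₂`, which the choice of `M` guarantees. -/

lemma one_add_abs_log_rpow_le {β s : ℝ} (hβ : 0 ≤ β) (hs : 0 < s) :
    ∃ C > 0, ∀ a : ℝ, 0 < a → a ≤ 1 → (1 + |log a|) ^ β ≤ C * a ^ (-s) := by
  set t := s / (β + 1)
  have ht : 0 < t := by positivity
  refine ⟨(1 + 1 / t) ^ β, by positivity, fun a ha ha1 => ?_⟩
  have hat : 0 < a ^ t := rpow_pos_of_pos ha t
  have hlog : |log a| ≤ a ^ (-t) / t := by
    have h := abs_log_mul_self_rpow_lt a t ha ha1 ht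
    rw [abs_mul, abs_of_pos hat, ← lt_div_iff₀ hat] at h
    rw [rpow_neg ha.le, show (a ^ t)⁻¹ / t = 1 / t / a ^ t by ring]
    exact h.le
  have hone : 1 ≤ a ^ (-t) := one_le_rpow_of_pos_of_le_one_of_nonpos ha ha1 (by linarith)
  calc (1 + |log a|) ^ β ≤ ((1 + 1 / t) * a ^ (-t)) ^ β := by
        gcongr
        calc 1 + |log a| ≤ a ^ (-t) + a ^ (-t) / t := by linarith
          _ = (1 + 1 / t) * a ^ (-t) := by ring
    _ = (1 + 1 / t) ^ β * a ^ (-(t * β)) := by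
        rw [mul_rpow (by positivity) (by positivity), ← rpow_mul ha.le, neg_mul]
    _ ≤ (1 + 1 / t) ^ β * a ^ (-s) := by
        refine mul_le_mul_of_nonneg_left (rpow_le_rpow_of_exponent_ge ha ha1 (neg_le_neg ?_))
          (by positivity)
        calc t * β = s * (β / (β + 1)) := by ring
          _ ≤ s * 1 := by gcongr; exact (div_le_one (by positivity)).2 (by linarith)
          _ = s := mul_one s

lemma log_one_add_div_le_of_le {a b : ℝ} (ha : 0 < a) (hab : a ≤ b) :
    log (1 + b / a) ≤ (1 + |log a|) * (1 + |log b|) := by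
  have hb : 0 < b := ha.trans_le hab
  have hba : 1 ≤ b / a := (one_le_div ha).2 hab
  have h2 : log 2 ≤ 1 := by linarith [log_two_lt_d9]
  calc log (1 + b / a) ≤ log (2 * (b / a)) := log_le_log (by positivity) (by linarith)
    _ = log 2 + log b - log a := by
        rw [log_mul two_ne_zero (by positivity), log_div hb.ne' ha.ne']; ring
    _ ≤ 1 + |log b| + |log a| := by linarith [le_abs_self (log b), neg_abs_le (log a)]
    _ ≤ (1 + |log a|) * (1 + |log b|) := by
        nlinarith [mul_nonneg (abs_nonneg (log a)) (abs_nonneg (log b))]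

lemma log_one_add_max_div_min_le {a b : ℝ} (ha : 0 < a) (hb : 0 < b) :
    log (1 + max a b / min a b) ≤ (1 + |log a|) * (1 + |log b|) := by
  rcases le_total a b with h | h
  · rw [max_eq_right h, min_eq_left h]
    exact log_one_add_div_le_of_le ha h
  · rw [max_eq_left h, min_eq_right h, mul_comm]
    exact log_one_add_div_le_of_le hb h

lemma log_one_add_le_of_le_div {a x q : ℝ} (ha : 0 < a) (ha1 : a ≤ 1) (hx : 1 ≤ x)
    (hq : 0 ≤ q) (hqx : q ≤ 2 * x / a) :
    log (1 + q) ≤ 3 * (1 + |log a|) * log (1 + x) := by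
  have hL : log 2 ≤ log (1 + x) := log_le_log two_pos (by linarith)
  have h3 : log 3 ≤ 2 * log 2 := by
    rw [← log_rpow two_pos]; exact log_le_log (by norm_num) (by norm_num)
  have hone : 1 ≤ 3 * log (1 + x) := by linarith [log_two_gt_d9]
  have hprod : 1 + q ≤ (1 + x) * (3 / a) := by
    have e : (1 + x) * (3 / a) = 3 / a + 3 * x / a := by ring
    have h1 : 1 ≤ 3 / a := by rw [le_div_iff₀ ha]; linarith
    have h2 : 2 * x / a ≤ 3 * x / a := by gcongr; norm_num
    linarith
  calc log (1 + q) ≤ log ((1 + x) * (3 / a)) := log_le_log (by linarith) hprod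
    _ = log (1 + x) + log 3 - log a := by
        rw [log_mul (by positivity) (by positivity), log_div (by norm_num) ha.ne']; ring
    _ ≤ 3 * log (1 + x) + |log a| * (3 * log (1 + x)) := by
        nlinarith [neg_abs_le (log a), abs_nonneg (log a)]
    _ = 3 * (1 + |log a|) * log (1 + x) := by ring

lemma min_rpow_mul_max_rpow_le {a b β₁ β₂ T : ℝ} (ha : 0 < a) (ha1 : a ≤ 1) (hb : 0 < b)
    (hT : 0 ≤ T) (hT' : β₁ - β₂ ≤ T) :
    min a b ^ β₁ * max a b ^ β₂ ≤ a ^ (β₁ - T) * (min b 1 ^ β₁ * max b 1 ^ β₂) := by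
  rcases le_total a b with hab | hba
  · rw [min_eq_left hab, max_eq_right hab]
    rcases le_total b 1 with hb1 | hb1
    · rw [min_eq_left hb1, max_eq_right hb1, one_rpow, mul_one]
      have key : a ^ T ≤ b ^ (β₁ - β₂) :=
        (rpow_le_rpow ha.le hab hT).trans (rpow_le_rpow_of_exponent_ge hb hb1 hT')
      calc a ^ β₁ * b ^ β₂ = a ^ (β₁ - T) * a ^ T * b ^ β₂ := by
            rw [← rpow_add ha]; ring_nf
        _ ≤ a ^ (β₁ - T) * b ^ (β₁ - β₂) * b ^ β₂ := by gcongr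
        _ = a ^ (β₁ - T) * b ^ β₁ := by rw [mul_assoc, ← rpow_add hb]; ring_nf
    · rw [min_eq_right hb1, max_eq_left hb1, one_rpow, one_mul]
      exact mul_le_mul_of_nonneg_right (rpow_le_rpow_of_exponent_ge ha ha1 (by linarith))
        (by positivity)
  · have hb1 : b ≤ 1 := hba.trans ha1
    rw [min_eq_right hba, max_eq_left hba, min_eq_left hb1, max_eq_right hb1, one_rpow,
      mul_one, mul_comm]
    exact mul_le_mul_of_nonneg_right (rpow_le_rpow_of_exponent_ge ha ha1 (by linarith))
      (by positivity)

lemma min_div_rpow_le {x r β : ℝ} (hx : 0 ≤ x) (hr : 0 < r) (hβ : 0 ≤ β) :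
    min (x / r) 1 ^ β ≤ x ^ β * r ^ (-β) := by
  calc min (x / r) 1 ^ β ≤ (x / r) ^ β :=
        rpow_le_rpow (le_min (div_nonneg hx hr.le) zero_le_one) (min_le_left _ _) hβ
    _ = x ^ β * r ^ (-β) := by rw [div_rpow hx hr.le, rpow_neg hr.le, div_eq_mul_inv]

lemma div_min_max_le {a b r w : ℝ} (ha : 0 < a) (ha1 : a ≤ 1) (hb : 0 < b) (hr : 0 < r)
    (hw : 1 ≤ w) (hbw : b ≤ w) (hrw : r ≤ 2 * w) :
    r / min (max a b) r ≤ 2 * (w / max b 1) / a := by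
  have hm : 0 < max b 1 := lt_max_of_lt_right one_pos
  have hx : 1 ≤ w / max b 1 := (one_le_div hm).2 (max_le hbw hw)
  rcases le_total (max a b) r with h | h
  · rw [min_eq_left h]
    have hamax : a * max b 1 ≤ max a b := by
      rcases le_total b 1 with hb1 | hb1
      · rw [max_eq_right hb1, mul_one]; exact le_max_left a b
      · rw [max_eq_left hb1]; exact (mul_le_of_le_one_left hb.le ha1).trans (le_max_right a b)
    calc r / max a b ≤ 2 * w / (a * max b 1) := by gcongr
      _ = 2 * (w / max b 1) / a := by field_simp
  · rw [min_eq_right h, div_self hr.ne', le_div_iff₀ ha]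
    linarith

lemma min_div_rpow_mul_max_div_rpow_le {a b r β₁ β₂ T : ℝ} (ha : 0 < a) (ha1 : a ≤ 1)
    (hb : 0 < b) (hr : 0 < r) (hβ₁ : 0 ≤ β₁) (hβ₂ : 0 ≤ β₂) (hT : 0 ≤ T) (hT' : β₁ - β₂ ≤ T) :
    min (min a b / r) 1 ^ β₁ * min (max a b / r) 1 ^ β₂ ≤
      a ^ (β₁ - T) * (min b 1 ^ β₁ * max b 1 ^ β₂) * r ^ (-β₁ - β₂) := by
  have hmin : 0 < min a b := lt_min ha hb
  have hmax : 0 < max a b := lt_max_of_lt_left ha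
  calc _ ≤ min a b ^ β₁ * r ^ (-β₁) * (max a b ^ β₂ * r ^ (-β₂)) :=
        mul_le_mul (min_div_rpow_le hmin.le hr hβ₁) (min_div_rpow_le hmax.le hr hβ₂)
          (by positivity) (by positivity)
    _ = min a b ^ β₁ * max a b ^ β₂ * r ^ (-β₁ - β₂) := by
        rw [sub_eq_add_neg, rpow_add hr]; ring
    _ ≤ _ := mul_le_mul_of_nonneg_right (min_rpow_mul_max_rpow_le ha ha1 hb hT hT')
        (by positivity)

lemma log_one_add_min_div_min_rpow_le {a b r β : ℝ} (ha : 0 < a) (har : a ≤ r) (hb : 0 < b)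
    (hβ : 0 ≤ β) :
    log (1 + min (max a b) r / min (min a b) r) ^ β ≤ (1 + |log a|) ^ β * (1 + |log b|) ^ β := by
  have hmin : min (min a b) r = min a b := min_eq_left ((min_le_left a b).trans har)
  have hq : min (max a b) r / min (min a b) r ≤ max a b / min a b := by
    rw [hmin]
    exact div_le_div_of_nonneg_right (min_le_left _ _) (lt_min ha hb).le
  have hr : 0 < r := ha.trans_le har
  have hq₀ : 0 ≤ min (max a b) r / min (min a b) r := by positivity
  rw [← mul_rpow (by positivity) (by positivity)]
  exact rpow_le_rpow (log_nonneg (by linarith))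
    ((log_le_log (by linarith) (by linarith)).trans (log_one_add_max_div_min_le ha hb)) hβ

lemma log_one_add_div_min_rpow_le {a b r w β : ℝ} (ha : 0 < a) (ha1 : a ≤ 1) (hb : 0 < b)
    (hr : 0 < r) (hw : 1 ≤ w) (hbw : b ≤ w) (hrw : r ≤ 2 * w) (hβ : 0 ≤ β) :
    log (1 + r / min (max a b) r) ^ β ≤
      3 ^ β * (1 + |log a|) ^ β * log (1 + w / max b 1) ^ β := by
  have hx : 1 ≤ w / max b 1 := (one_le_div (lt_max_of_lt_right one_pos)).2 (max_le hbw hw)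
  have hq : 0 ≤ r / min (max a b) r := div_nonneg hr.le (le_min (le_max_of_le_left ha.le) hr.le)
  rw [← mul_rpow (by positivity) (by positivity), ← mul_rpow (by positivity)
    (log_nonneg (by linarith))]
  exact rpow_le_rpow (log_nonneg (by linarith))
    (log_one_add_le_of_le_div ha ha1 hx hq (div_min_max_le ha ha1 hb hr hw hbw hrw)) hβ

/-- The left side is `Btilde z y` in the variables `a = z.2`, `b = y.2`, `r = nrm (z - y)`;
`w` stands for `nrm y`. -/
lemma Btilde_profile_le {β₁ β₂ β₃ β₄ E : ℝ} (hβ₁ : 0 ≤ β₁) (hβ₂ : 0 ≤ β₂) (hβ₃ : 0 ≤ β₃)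
    (hβ₄ : 0 ≤ β₄) (hE : 0 < E) (hE' : β₁ - β₂ < E) :
    ∃ C > 0, ∀ a b r w : ℝ, 0 < a → a ≤ 1 → a ≤ r → 0 < b → 1 ≤ w → b ≤ w → r ≤ 2 * w →
      min (min a b / r) 1 ^ β₁ * min (max a b / r) 1 ^ β₂ *
          log (1 + min (max a b) r / min (min a b) r) ^ β₃ *
          log (1 + r / min (max a b) r) ^ β₄
        ≤ C * a ^ (β₁ - E) * (min b 1 ^ β₁ * max b 1 ^ β₂ * r ^ (-β₁ - β₂) *
          (1 + |log b|) ^ β₃ * log (1 + w / max b 1) ^ β₄) := by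
  set T := max 0 (β₁ - β₂)
  obtain ⟨K, hK, hlog⟩ :=
    one_add_abs_log_rpow_le (add_nonneg hβ₃ hβ₄) (sub_pos.2 (max_lt hE hE') : 0 < E - T)
  refine ⟨3 ^ β₄ * K, by positivity, fun a b r w ha ha1 har hb hw hbw hrw => ?_⟩
  have hr : 0 < r := ha.trans_le har
  set L := log (1 + w / max b 1)
  have hL : 0 ≤ L := log_nonneg (le_add_of_nonneg_right (by positivity))
  have hrest : 0 ≤ min b 1 ^ β₁ * max b 1 ^ β₂ * r ^ (-β₁ - β₂) * (1 + |log b|) ^ β₃ * L ^ β₄ := by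
    have := rpow_nonneg hL β₄
    positivity
  calc _ ≤ a ^ (β₁ - T) * (min b 1 ^ β₁ * max b 1 ^ β₂) * r ^ (-β₁ - β₂) *
        ((1 + |log a|) ^ β₃ * (1 + |log b|) ^ β₃) * (3 ^ β₄ * (1 + |log a|) ^ β₄ * L ^ β₄) := by
        gcongr ?_ * ?_ * ?_
        · exact rpow_nonneg (log_nonneg (le_add_of_nonneg_right (by positivity))) _
        · exact rpow_nonneg (log_nonneg (le_add_of_nonneg_right (by positivity))) _
        · exact min_div_rpow_mul_max_div_rpow_le ha ha1 hb hr hβ₁ hβ₂ (le_max_left _ _)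
            (le_max_right _ _)
        · exact log_one_add_min_div_min_rpow_le ha har hb hβ₃
        · exact log_one_add_div_min_rpow_le ha ha1 hb hr hw hbw hrw hβ₄
    _ = 3 ^ β₄ * ((1 + |log a|) ^ β₃ * (1 + |log a|) ^ β₄) * a ^ (β₁ - T) *
        (min b 1 ^ β₁ * max b 1 ^ β₂ * r ^ (-β₁ - β₂) * (1 + |log b|) ^ β₃ * L ^ β₄) := by ring
    _ ≤ 3 ^ β₄ * (K * a ^ (-(E - T))) * a ^ (β₁ - T) *
        (min b 1 ^ β₁ * max b 1 ^ β₂ * r ^ (-β₁ - β₂) * (1 + |log b|) ^ β₃ * L ^ β₄) := by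
      gcongr 3 ^ β₄ * ?_ * _ * _
      rw [← rpow_add (by positivity)]
      exact hlog a ha ha1
    _ = 3 ^ β₄ * K * (a ^ (-(E - T)) * a ^ (β₁ - T)) *
        (min b 1 ^ β₁ * max b 1 ^ β₂ * r ^ (-β₁ - β₂) * (1 + |log b|) ^ β₃ * L ^ β₄) := by ring
    _ = _ := by rw [← rpow_add ha]; ring_nf

lemma nrm_eq_norm_toLp {m : ℕ} (x : Pt m) : nrm x = ‖WithLp.toLp 2 x‖ := by
  rw [WithLp.prod_norm_eq_of_L2, Real.norm_eq_abs, sq_abs]; rfl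

lemma nrm_sub_le {m : ℕ} (x y : Pt m) : nrm (x - y) ≤ nrm x + nrm y := by
  simpa only [nrm_eq_norm_toLp, WithLp.toLp_sub] using norm_sub_le _ _

lemma norm_fst_le_nrm {m : ℕ} (x : Pt m) : ‖x.1‖ ≤ nrm x := by
  have h := Real.abs_le_sqrt (le_add_of_nonneg_right (sq_nonneg x.2) : ‖x.1‖ ^ 2 ≤ _)
  rwa [abs_norm] at h

lemma abs_snd_le_nrm {m : ℕ} (x : Pt m) : |x.2| ≤ nrm x :=
  Real.abs_le_sqrt (le_add_of_nonneg_left (sq_nonneg ‖x.1‖))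

lemma nrm_le_one_of_mem_Dbox {m : ℕ} {z : Pt m} (hz : z ∈ Dbox (1 / 2) (1 / 2)) :
    nrm z ≤ 1 := by
  obtain ⟨h1, h2, h3⟩ := hz
  refine Real.sqrt_le_one.2 ?_
  nlinarith [norm_nonneg z.1]

lemma nrm_bounds_of_mem_Dbox_of_notMem_Dbox {m : ℕ} {z y : Pt m}
    (hz : z ∈ Dbox (1 / 2) (1 / 2)) (hy : 0 < y.2) (hyD : y ∉ Dbox 1 1) :
    1 / 2 ≤ nrm (z - y) ∧ 1 ≤ nrm y ∧ nrm (z - y) ≤ 2 * nrm y ∧ nrm y ≤ 3 * nrm (z - y) := by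
  have hz1 := nrm_le_one_of_mem_Dbox hz
  obtain ⟨hz₁, -, hz₂⟩ := hz
  have hfar : 1 ≤ ‖y.1‖ ∨ 1 ≤ y.2 := by
    by_contra! h
    exact hyD ⟨h.1, hy, h.2⟩
  have hzy : 1 / 2 ≤ nrm (z - y) := by
    rcases hfar with h | h
    · have h₁ := norm_fst_le_nrm (z - y)
      rw [Prod.fst_sub, norm_sub_rev] at h₁
      linarith [norm_sub_norm_le y.1 z.1]
    · have h₂ := abs_snd_le_nrm (z - y)
      rw [Prod.snd_sub] at h₂
      linarith [neg_abs_le (z.2 - y.2)]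
  have hy1 : 1 ≤ nrm y := by
    rcases hfar with h | h
    · linarith [norm_fst_le_nrm y]
    · linarith [le_abs_self y.2, abs_snd_le_nrm y]
  have hy3 : nrm y ≤ nrm z + nrm (z - y) := by
    simpa only [sub_sub_cancel] using nrm_sub_le z (z - y)
  exact ⟨hzy, hy1, by linarith [nrm_sub_le z y], by linarith⟩

lemma rpow_neg_le_of_le_mul {r w c γ : ℝ} (hw : 0 < w) (hc : 0 < c) (hwr : w ≤ c * r)
    (hγ : 0 ≤ γ) : r ^ (-γ) ≤ c ^ γ * w ^ (-γ) := by
  calc r ^ (-γ) ≤ (w / c) ^ (-γ) :=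
        rpow_le_rpow_of_nonpos (by positivity) ((div_le_iff₀' hc).2 hwr) (neg_nonpos.2 hγ)
    _ = c ^ γ * w ^ (-γ) := by
        rw [div_rpow hw.le hc.le, rpow_neg hc.le, div_inv_eq_mul, mul_comm]

lemma rpow_mul_Btilde_le_kfun (m d : ℕ) {α β₁ β₂ β₃ β₄ E : ℝ} (hα : 0 ≤ α) (hβ₁ : 0 ≤ β₁)
    (hβ₂ : 0 ≤ β₂) (hβ₃ : 0 ≤ β₃) (hβ₄ : 0 ≤ β₄) (hE : 0 < E) (hE' : β₁ - β₂ < E) :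
    ∃ C > 0, ∀ z y : Pt m, z ∈ Dbox (1 / 2) (1 / 2) → 0 < y.2 → y ∉ Dbox 1 1 →
      nrm (z - y) ^ (-(d : ℝ) - α) * Btilde β₁ β₂ β₃ β₄ z y
        ≤ C * z.2 ^ (β₁ - E) * kfun d α β₁ β₂ β₃ β₄ y := by
  obtain ⟨C, hC, hprofile⟩ := Btilde_profile_le hβ₁ hβ₂ hβ₃ hβ₄ hE hE'
  set γ := (d : ℝ) + α + β₁ + β₂
  refine ⟨3 ^ γ * C, by positivity, fun z y hz hy hyD => ?_⟩
  obtain ⟨hr, hw, hrw, hwr⟩ := nrm_bounds_of_mem_Dbox_of_notMem_Dbox hz hy hyD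
  have hr0 : 0 < nrm (z - y) := by linarith
  have hB : Btilde β₁ β₂ β₃ β₄ z y ≤ C * z.2 ^ (β₁ - E) * (min y.2 1 ^ β₁ * max y.2 1 ^ β₂ *
      nrm (z - y) ^ (-β₁ - β₂) * (1 + |log y.2|) ^ β₃ * log (1 + nrm y / max y.2 1) ^ β₄) :=
    hprofile z.2 y.2 (nrm (z - y)) (nrm y) hz.2.1 (by linarith [hz.2.2]) (by linarith [hz.2.2])
      hy hw (by linarith [le_abs_self y.2, abs_snd_le_nrm y]) hrw
  have hdecay : nrm (z - y) ^ (-(d : ℝ) - α) * nrm (z - y) ^ (-β₁ - β₂)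
      ≤ 3 ^ γ * nrm y ^ (-(d : ℝ) - α - β₁ - β₂) := by
    rw [← rpow_add hr0, show -(d : ℝ) - α + (-β₁ - β₂) = -γ by ring,
      show -(d : ℝ) - α - β₁ - β₂ = -γ by ring]
    exact rpow_neg_le_of_le_mul (by linarith) three_pos hwr (by positivity)
  have hlog : 0 ≤ log (1 + nrm y / max y.2 1) :=
    log_nonneg (le_add_of_nonneg_right (div_nonneg (by linarith) (by positivity)))
  have hrest : 0 ≤ C * z.2 ^ (β₁ - E) * (min y.2 1 ^ β₁ * max y.2 1 ^ β₂ *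
      (1 + |log y.2|) ^ β₃ * log (1 + nrm y / max y.2 1) ^ β₄) := by
    have := rpow_nonneg hlog β₄
    have := hz.2.1
    positivity
  calc _ ≤ nrm (z - y) ^ (-(d : ℝ) - α) * (C * z.2 ^ (β₁ - E) * (min y.2 1 ^ β₁ *
        max y.2 1 ^ β₂ * nrm (z - y) ^ (-β₁ - β₂) * (1 + |log y.2|) ^ β₃ *
          log (1 + nrm y / max y.2 1) ^ β₄)) :=
        mul_le_mul_of_nonneg_left hB (rpow_nonneg hr0.le _)
    _ = (nrm (z - y) ^ (-(d : ℝ) - α) * nrm (z - y) ^ (-β₁ - β₂)) *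
        (C * z.2 ^ (β₁ - E) * (min y.2 1 ^ β₁ * max y.2 1 ^ β₂ *
          (1 + |log y.2|) ^ β₃ * log (1 + nrm y / max y.2 1) ^ β₄)) := by ring
    _ ≤ 3 ^ γ * nrm y ^ (-(d : ℝ) - α - β₁ - β₂) *
        (C * z.2 ^ (β₁ - E) * (min y.2 1 ^ β₁ * max y.2 1 ^ β₂ *
          (1 + |log y.2|) ^ β₃ * log (1 + nrm y / max y.2 1) ^ β₄)) :=
        mul_le_mul_of_nonneg_right hdecay hrest
    _ = 3 ^ γ * C * z.2 ^ (β₁ - E) * kfun d α β₁ β₂ β₃ β₄ y := by unfold kfun; ring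

lemma sub_div_one_add_max_div_pos {u v : ℝ} (hu : 0 < u) (hv : 0 < v) :
    0 < u - v / (1 + max (v / u) 1) := by
  have hM : v / u < 1 + max (v / u) 1 := by linarith [le_max_left (v / u) 1]
  rw [div_lt_iff₀ hu] at hM
  rw [sub_pos, div_lt_iff₀ (by positivity)]
  linarith

lemma sub_lt_sub_div_one_add_max_div (u : ℝ) {v : ℝ} (hv : 0 < v) :
    u - v < u - v / (1 + max (v / u) 1) := by
  have hM : 1 < 1 + max (v / u) 1 := by linarith [le_max_right (v / u) 1]
  linarith [div_lt_self hv hM]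

theorem stmt_9_general (d : ℕ) (α p β₁ β₂ β₃ β₄ C₂ : ℝ)
    (hα0 : 0 < α)
    (hβ₁ : 0 ≤ β₁) (hβ₂ : 0 ≤ β₂) (hβ₃ : 0 ≤ β₃) (hβ₄ : 0 ≤ β₄)
    (hC₂ : 1 ≤ C₂)
    (hp2 : p < α + min β₁ β₂)
    (B : Pt (d - 1) → Pt (d - 1) → ℝ)
    (hBu : ∀ x y : Pt (d - 1), 0 < x.2 → 0 < y.2 →
      B x y ≤ C₂ * Btilde β₁ β₂ β₃ β₄ x y) :
    ∃ c : ℝ, 0 < c ∧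
      ∀ z y : Pt (d - 1),
        z ∈ (Dbox (1 / 2) (1 / 2) : Set (Pt (d - 1))) →
        0 < y.2 → y ∉ (Dbox 1 1 : Set (Pt (d - 1))) →
        nrm (z - y) ^ (-(d : ℝ) - α) * B z y
          ≤ c * z.2 ^ (β₁ -
              (β₁ + α - p -
                (β₂ + α - p) / (1 + max ((β₂ + α - p) / (β₁ + α - p)) 1))) *
            kfun d α β₁ β₂ β₃ β₄ y := by
  have hu : 0 < β₁ + α - p := by linarith [min_le_left β₁ β₂]
  have hv : 0 < β₂ + α - p := by linarith [min_le_right β₁ β₂]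
  obtain ⟨C, hC, hkernel⟩ := rpow_mul_Btilde_le_kfun (d - 1) d hα0.le hβ₁ hβ₂ hβ₃ hβ₄
    (sub_div_one_add_max_div_pos hu hv)
    (by linarith [sub_lt_sub_div_one_add_max_div (β₁ + α - p) hv])
  refine ⟨C₂ * C, by positivity, fun z y hz hy hyD => ?_⟩
  calc nrm (z - y) ^ (-(d : ℝ) - α) * B z y
      ≤ nrm (z - y) ^ (-(d : ℝ) - α) * (C₂ * Btilde β₁ β₂ β₃ β₄ z y) :=
        mul_le_mul_of_nonneg_left (hBu z y hz.2.1 hy) (rpow_nonneg (Real.sqrt_nonneg _) _)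
    _ = C₂ * (nrm (z - y) ^ (-(d : ℝ) - α) * Btilde β₁ β₂ β₃ β₄ z y) := by ring
    _ ≤ C₂ * (C * _ * kfun d α β₁ β₂ β₃ β₄ y) :=
        mul_le_mul_of_nonneg_left (hkernel z y hz hy hyD) (by linarith)
    _ = _ := by ring

theorem stmt_9 (d : ℕ) (hd : 2 ≤ d) (α p β₁ β₂ β₃ β₄ C₂ : ℝ)
    (hα0 : 0 < α) (hα2 : α < 2)
    (hβ₁ : 0 ≤ β₁) (hβ₂ : 0 ≤ β₂) (hβ₃ : 0 ≤ β₃) (hβ₄ : 0 ≤ β₄)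
    (h13 : 0 < β₃ → 0 < β₁) (h24 : 0 < β₄ → 0 < β₂) (hC₂ : 1 ≤ C₂)
    (hp1 : max (α - 1) 0 < p) (hp2 : p < α + min β₁ β₂)
    (B : Pt (d - 1) → Pt (d - 1) → ℝ)
    (hB0 : ∀ x y, 0 ≤ B x y)
    (hBl : ∀ x y : Pt (d - 1), 0 < x.2 → 0 < y.2 →
      C₂⁻¹ * Btilde β₁ β₂ β₃ β₄ x y ≤ B x y)
    (hBu : ∀ x y : Pt (d - 1), 0 < x.2 → 0 < y.2 →
      B x y ≤ C₂ * Btilde β₁ β₂ β₃ β₄ x y) :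
    ∃ c : ℝ, 0 < c ∧
      ∀ z y : Pt (d - 1),
        z ∈ (Dbox (1 / 2) (1 / 2) : Set (Pt (d - 1))) →
        0 < y.2 → y ∉ (Dbox 1 1 : Set (Pt (d - 1))) →
        nrm (z - y) ^ (-(d : ℝ) - α) * B z y
          ≤ c * z.2 ^ (β₁ -
              (β₁ + α - p -
                (β₂ + α - p) / (1 + max ((β₂ + α - p) / (β₁ + α - p)) 1))) *
            kfun d α β₁ β₂ β₃ β₄ y :=
  stmt_9_general d α p β₁ β₂ β₃ β₄ C₂ hα0 hβ₁ hβ₂ hβ₃ hβ₄ hC₂ hp2 B hBu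

end
end

section
/- Assume the (A3) setting. There exist constants 0 < c ≤ C, depending only on d, α, β₁, β₂, β₃, β₄ and C₂, such that for every r₀ ∈ (0, 1/4], every z₀ ∈ ∂ℝ^d_+ with |z₀| = 4, every z ∈ U(r₀) and every y ∈ ℝ^d_+ ∩ B(z₀, 1/4), one has c · E(z,y) ≤ J(z,y) ≤ C · E(z,y), where E(z,y) = (z_d ∧ y_d)^{β₁} (z_d ∨ y_d)^{β₂} (log(1 + (z_d ∨ y_d)/(z_d ∧ y_d)))^{β₃} (log(1/(z_d ∨ y_d)))^{β₄}. -/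
open MeasureTheory Real

noncomputable section

lemma nrm_le_norm_fst_add_abs_snd {m : ℕ} (x : Pt m) : nrm x ≤ ‖x.1‖ + |x.2| := by
  rw [nrm, Real.sqrt_le_iff]
  refine ⟨by positivity, ?_⟩
  nlinarith [sq_abs x.2, norm_nonneg x.1, abs_nonneg x.2]

lemma abs_nrm_sub_sub_nrm_le {m : ℕ} (z y z₀ : Pt m) :
    |nrm (z - y) - nrm z₀| ≤ nrm z + nrm (y - z₀) := by
  simp only [nrm_eq_norm_toLp, WithLp.toLp_sub]
  calc |‖WithLp.toLp 2 z - WithLp.toLp 2 y‖ - ‖WithLp.toLp 2 z₀‖|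
      = |‖WithLp.toLp 2 z - WithLp.toLp 2 y‖ - ‖-WithLp.toLp 2 z₀‖| := by rw [norm_neg]
    _ ≤ ‖WithLp.toLp 2 z - WithLp.toLp 2 y - -WithLp.toLp 2 z₀‖ := abs_norm_sub_norm_le _ _
    _ = ‖WithLp.toLp 2 z - (WithLp.toLp 2 y - WithLp.toLp 2 z₀)‖ := by congr 1; abel
    _ ≤ _ := norm_sub_le _ _

lemma nrm_lt_of_mem_Dbox {m : ℕ} {a b : ℝ} {z : Pt m} (hz : z ∈ Dbox a b) : nrm z < a + b := by
  obtain ⟨h1, h2, h3⟩ := hz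
  have := nrm_le_norm_fst_add_abs_snd z
  rw [abs_of_pos h2] at this
  linarith

lemma Btilde_eq_of_max_le {m : ℕ} (β₁ β₂ β₃ β₄ : ℝ) {x y : Pt m}
    (h : max x.2 y.2 ≤ nrm (x - y)) :
    Btilde β₁ β₂ β₃ β₄ x y =
      (min x.2 y.2 / nrm (x - y)) ^ β₁ * (max x.2 y.2 / nrm (x - y)) ^ β₂ *
        Real.log (1 + max x.2 y.2 / min x.2 y.2) ^ β₃ *
        Real.log (1 + nrm (x - y) / max x.2 y.2) ^ β₄ := by
  have hmin : min x.2 y.2 ≤ nrm (x - y) := min_le_max.trans h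
  have hN : 0 ≤ nrm (x - y) := (abs_nonneg _).trans (abs_snd_le_nrm _)
  rw [Btilde, min_eq_left h, min_eq_left hmin, min_eq_left (div_le_one_of_le₀ h hN),
    min_eq_left (div_le_one_of_le₀ hmin hN)]

lemma rpow_mul_Btilde_eq {m : ℕ} (γ β₁ β₂ β₃ β₄ : ℝ) {x y : Pt m}
    (hx : 0 < x.2) (hy : 0 < y.2) (h : max x.2 y.2 ≤ nrm (x - y)) :
    nrm (x - y) ^ γ * Btilde β₁ β₂ β₃ β₄ x y =
      min x.2 y.2 ^ β₁ * max x.2 y.2 ^ β₂ * Real.log (1 + max x.2 y.2 / min x.2 y.2) ^ β₃ *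
        Real.log (1 + nrm (x - y) / max x.2 y.2) ^ β₄ * nrm (x - y) ^ (γ - β₁ - β₂) := by
  have hN : 0 < nrm (x - y) := (lt_max_of_lt_left hx).trans_le h
  rw [Btilde_eq_of_max_le _ _ _ _ h, Real.div_rpow (lt_min hx hy).le hN.le,
    Real.div_rpow (lt_max_of_lt_left hx).le hN.le, Real.rpow_sub hN, Real.rpow_sub hN]
  field_simp

lemma log_one_div_le_log_one_add_div {M N : ℝ} (hM : 0 < M) (hN : 1 ≤ N) :
    Real.log (1 / M) ≤ Real.log (1 + N / M) := by
  gcongr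
  linarith [(div_le_div_iff_of_pos_right hM).2 hN]

lemma log_one_add_div_le_three_mul_log_one_div {M N : ℝ} (hM : 0 < M) (hM' : M < 1 / 4)
    (hN₀ : 0 ≤ N) (hN : N ≤ 5) : Real.log (1 + N / M) ≤ 3 * Real.log (1 / M) := by
  have hN' : 1 + N / M ≤ (1 / M) ^ 3 := by
    rw [div_pow, one_pow, le_div_iff₀ (by positivity), add_mul, div_mul_eq_mul_div,
      mul_div_assoc, pow_succ, mul_div_cancel_right₀ _ hM.ne']
    nlinarith [mul_pos hM hM]
  calc Real.log (1 + N / M) ≤ Real.log ((1 / M) ^ 3) := by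
        exact Real.log_le_log (by positivity) hN'
    _ = 3 * Real.log (1 / M) := by rw [Real.log_pow]; norm_num

/-- The function `E(z, y)` of the statement, as a function of the heights `z_d`, `y_d`. -/
def farKernel (β₁ β₂ β₃ β₄ s t : ℝ) : ℝ :=
  min s t ^ β₁ * max s t ^ β₂ * Real.log (1 + max s t / min s t) ^ β₃ *
    Real.log (1 / max s t) ^ β₄

lemma rpow_mul_Btilde_comparable_farKernel {m : ℕ} {γ β₁ β₂ β₃ β₄ : ℝ}
    (hγ : γ - β₁ - β₂ ≤ 0) (hβ₄ : 0 ≤ β₄) {x y : Pt m} (hx : 0 < x.2) (hy : 0 < y.2)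
    (hmax : max x.2 y.2 < 1 / 4) (hN₃ : 3 ≤ nrm (x - y)) (hN₅ : nrm (x - y) ≤ 5) :
    5 ^ (γ - β₁ - β₂) * farKernel β₁ β₂ β₃ β₄ x.2 y.2 ≤
        nrm (x - y) ^ γ * Btilde β₁ β₂ β₃ β₄ x y ∧
      nrm (x - y) ^ γ * Btilde β₁ β₂ β₃ β₄ x y ≤
        3 ^ β₄ * 3 ^ (γ - β₁ - β₂) * farKernel β₁ β₂ β₃ β₄ x.2 y.2 := by
  set M := max x.2 y.2
  set N := nrm (x - y)
  have hM : 0 < M := lt_max_of_lt_left hx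
  rw [rpow_mul_Btilde_eq _ _ _ _ _ hx hy (by linarith), farKernel]
  set P := min x.2 y.2 ^ β₁ * M ^ β₂ * Real.log (1 + M / min x.2 y.2) ^ β₃
  have hP : 0 ≤ P := by
    have : 0 ≤ Real.log (1 + M / min x.2 y.2) :=
      Real.log_nonneg (by have := div_nonneg hM.le (lt_min hx hy).le; linarith)
    positivity
  have hL₀ : 0 ≤ Real.log (1 / M) := Real.log_nonneg (by rw [le_div_iff₀ hM]; linarith)
  have hLN : Real.log (1 / M) ≤ Real.log (1 + N / M) :=
    log_one_div_le_log_one_add_div hM (by linarith)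
  have hLN' : Real.log (1 + N / M) ≤ 3 * Real.log (1 / M) :=
    log_one_add_div_le_three_mul_log_one_div hM hmax (by linarith) hN₅
  constructor
  · calc 5 ^ (γ - β₁ - β₂) * (P * Real.log (1 / M) ^ β₄)
        = P * Real.log (1 / M) ^ β₄ * 5 ^ (γ - β₁ - β₂) := by ring
      _ ≤ P * Real.log (1 + N / M) ^ β₄ * N ^ (γ - β₁ - β₂) := by
        refine mul_le_mul (by gcongr) (Real.rpow_le_rpow_of_nonpos ?_ hN₅ hγ) (by positivity)
          (mul_nonneg hP (Real.rpow_nonneg (hL₀.trans hLN) _))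
        linarith
  · calc P * Real.log (1 + N / M) ^ β₄ * N ^ (γ - β₁ - β₂)
        ≤ P * (3 * Real.log (1 / M)) ^ β₄ * 3 ^ (γ - β₁ - β₂) := by
          refine mul_le_mul (by gcongr; exact hL₀.trans hLN)
            (Real.rpow_le_rpow_of_nonpos (by norm_num) hN₃ hγ) (by positivity) (by positivity)
      _ = 3 ^ β₄ * 3 ^ (γ - β₁ - β₂) * (P * Real.log (1 / M) ^ β₄) := by
        rw [Real.mul_rpow (by norm_num) hL₀]; ring

lemma nrm_sub_mem_Icc {m : ℕ} {r₀ : ℝ} (hr₀ : r₀ ≤ 1 / 4) {z₀ z y : Pt m} (hz₀ : nrm z₀ = 4)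
    (hz : z ∈ Dbox (r₀ / 2) (r₀ / 2)) (hy : nrm (y - z₀) < 1 / 4) :
    3 ≤ nrm (z - y) ∧ nrm (z - y) ≤ 5 := by
  have hdist := abs_le.1 (abs_nrm_sub_sub_nrm_le z y z₀)
  have hz' := nrm_lt_of_mem_Dbox hz
  constructor <;> linarith [hdist.1, hdist.2]

theorem stmt_19_general (d : ℕ) (α β₁ β₂ β₃ β₄ C₂ : ℝ)
    (hα0 : 0 < α)
    (hβ₁ : 0 ≤ β₁) (hβ₂ : 0 ≤ β₂) (hβ₄ : 0 ≤ β₄)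
    (hC₂ : 1 ≤ C₂)
    (B : Pt (d - 1) → Pt (d - 1) → ℝ)
    (hBl : ∀ x y : Pt (d - 1), 0 < x.2 → 0 < y.2 →
      C₂⁻¹ * Btilde β₁ β₂ β₃ β₄ x y ≤ B x y)
    (hBu : ∀ x y : Pt (d - 1), 0 < x.2 → 0 < y.2 →
      B x y ≤ C₂ * Btilde β₁ β₂ β₃ β₄ x y) :
    ∃ c C : ℝ, 0 < c ∧ c ≤ C ∧
      ∀ r₀ : ℝ, 0 < r₀ → r₀ ≤ 1 / 4 →
      ∀ z₀ : Pt (d - 1), z₀.2 = 0 → nrm z₀ = 4 →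
      ∀ z y : Pt (d - 1),
        z ∈ (Dbox (r₀ / 2) (r₀ / 2) : Set (Pt (d - 1))) →
        0 < y.2 → nrm (y - z₀) < 1 / 4 →
        (c * ((min z.2 y.2) ^ β₁ * (max z.2 y.2) ^ β₂ *
              (Real.log (1 + max z.2 y.2 / min z.2 y.2)) ^ β₃ *
              (Real.log (1 / max z.2 y.2)) ^ β₄)
            ≤ nrm (z - y) ^ (-(d : ℝ) - α) * B z y) ∧
        (nrm (z - y) ^ (-(d : ℝ) - α) * B z y
            ≤ C * ((min z.2 y.2) ^ β₁ * (max z.2 y.2) ^ β₂ *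
                (Real.log (1 + max z.2 y.2 / min z.2 y.2)) ^ β₃ *
                (Real.log (1 / max z.2 y.2)) ^ β₄)) := by
  set e := -(d : ℝ) - α - β₁ - β₂
  have he : e ≤ 0 := by linarith [d.cast_nonneg (α := ℝ)]
  have hC₂' : 0 < C₂ := by linarith
  refine ⟨C₂⁻¹ * 5 ^ e, C₂ * (3 ^ β₄ * 3 ^ e), by positivity, ?_, ?_⟩
  · refine mul_le_mul ((inv_le_one_of_one_le₀ hC₂).trans hC₂) ?_ (by positivity) hC₂'.le
    calc (5 : ℝ) ^ e ≤ 3 ^ e := Real.rpow_le_rpow_of_nonpos (by norm_num) (by norm_num) he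
      _ ≤ 3 ^ β₄ * 3 ^ e := le_mul_of_one_le_left (by positivity) (Real.one_le_rpow (by norm_num) hβ₄)
  intro r₀ _ hr₀ z₀ hz₀ hz₀n z y hz hy hyz₀
  obtain ⟨hN₃, hN₅⟩ := nrm_sub_mem_Icc hr₀ hz₀n hz hyz₀
  have hy4 : y.2 < 1 / 4 := by
    have := (le_abs_self _).trans_lt ((abs_snd_le_nrm (y - z₀)).trans_lt hyz₀)
    simpa [hz₀] using this
  obtain ⟨hlow, hup⟩ := rpow_mul_Btilde_comparable_farKernel he hβ₄ hz.2.1 hy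
    (max_lt (by linarith [hz.2.2]) hy4) hN₃ hN₅
  have hNγ : 0 ≤ nrm (z - y) ^ (-(d : ℝ) - α) := Real.rpow_nonneg (by linarith) _
  constructor
  · calc _ = C₂⁻¹ * (5 ^ e * farKernel β₁ β₂ β₃ β₄ z.2 y.2) := by rw [farKernel]; ring
      _ ≤ C₂⁻¹ * (nrm (z - y) ^ (-(d : ℝ) - α) * Btilde β₁ β₂ β₃ β₄ z y) := by gcongr
      _ = nrm (z - y) ^ (-(d : ℝ) - α) * (C₂⁻¹ * Btilde β₁ β₂ β₃ β₄ z y) := by ring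
      _ ≤ _ := by gcongr; exact hBl z y hz.2.1 hy
  · calc _ ≤ nrm (z - y) ^ (-(d : ℝ) - α) * (C₂ * Btilde β₁ β₂ β₃ β₄ z y) := by
          gcongr; exact hBu z y hz.2.1 hy
      _ = C₂ * (nrm (z - y) ^ (-(d : ℝ) - α) * Btilde β₁ β₂ β₃ β₄ z y) := by ring
      _ ≤ C₂ * (3 ^ β₄ * 3 ^ e * farKernel β₁ β₂ β₃ β₄ z.2 y.2) := by gcongr
      _ = _ := by rw [farKernel]; ring

theorem stmt_19 (d : ℕ) (hd : 2 ≤ d) (α β₁ β₂ β₃ β₄ C₂ : ℝ)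
    (hα0 : 0 < α) (hα2 : α < 2)
    (hβ₁ : 0 ≤ β₁) (hβ₂ : 0 ≤ β₂) (hβ₃ : 0 ≤ β₃) (hβ₄ : 0 ≤ β₄)
    (h13 : 0 < β₃ → 0 < β₁) (h24 : 0 < β₄ → 0 < β₂) (hC₂ : 1 ≤ C₂)
    (B : Pt (d - 1) → Pt (d - 1) → ℝ)
    (hB0 : ∀ x y, 0 ≤ B x y)
    (hBl : ∀ x y : Pt (d - 1), 0 < x.2 → 0 < y.2 →
      C₂⁻¹ * Btilde β₁ β₂ β₃ β₄ x y ≤ B x y)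
    (hBu : ∀ x y : Pt (d - 1), 0 < x.2 → 0 < y.2 →
      B x y ≤ C₂ * Btilde β₁ β₂ β₃ β₄ x y) :
    ∃ c C : ℝ, 0 < c ∧ c ≤ C ∧
      ∀ r₀ : ℝ, 0 < r₀ → r₀ ≤ 1 / 4 →
      ∀ z₀ : Pt (d - 1), z₀.2 = 0 → nrm z₀ = 4 →
      ∀ z y : Pt (d - 1),
        z ∈ (Dbox (r₀ / 2) (r₀ / 2) : Set (Pt (d - 1))) →
        0 < y.2 → nrm (y - z₀) < 1 / 4 →
        (c * ((min z.2 y.2) ^ β₁ * (max z.2 y.2) ^ β₂ *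
              (Real.log (1 + max z.2 y.2 / min z.2 y.2)) ^ β₃ *
              (Real.log (1 / max z.2 y.2)) ^ β₄)
            ≤ nrm (z - y) ^ (-(d : ℝ) - α) * B z y) ∧
        (nrm (z - y) ^ (-(d : ℝ) - α) * B z y
            ≤ C * ((min z.2 y.2) ^ β₁ * (max z.2 y.2) ^ β₂ *
                (Real.log (1 + max z.2 y.2 / min z.2 y.2)) ^ β₃ *
                (Real.log (1 / max z.2 y.2)) ^ β₄)) :=
  stmt_19_general d α β₁ β₂ β₃ β₄ C₂ hα0 hβ₁ hβ₂ hβ₄ hC₂ B hBl hBu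
end
end
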